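/- Compression does not decrease spectral irregularity: let G be a finite simple graph on n ≥ 1 vertices, let u and v be distinct vertices of G, and let G' = G_{u→v} be the compression of G from u to v. Then ε(G') ≥ ε(G), where ε denotes the spectral irregularity; equivalently, since G and G' have the same numbers of vertices and edges and hence the same average degree, the largest eigenvalue of the adjacency matrix of G' is at least the largest eigenvalue of the adjacency matrix of G. -/

import Mathlib

/-- The compression `G_{u→v}` of the simple graph `G` from vertex `u` to vertex `v`:
for each vertex `x` adjacent to `u` but neither adjacent nor equal to `v`, the edge
`{x, u}` is deleted and the edge `{x, v}` is added. -/
def SimpleGraph.compress {V : Type*} [DecidableEq V] (G : SimpleGraph V) (u v : V) :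
    SimpleGraph V where
  Adj x y :=
    (G.Adj x y ∧ ¬(x = u ∧ G.Adj u y ∧ ¬G.Adj v y ∧ y ≠ v) ∧
      ¬(y = u ∧ G.Adj u x ∧ ¬G.Adj v x ∧ x ≠ v)) ∨
    (x = v ∧ G.Adj u y ∧ ¬G.Adj v y ∧ y ≠ v) ∨
    (y = v ∧ G.Adj u x ∧ ¬G.Adj v x ∧ x ≠ v)
  symm := ⟨fun x y h => by
    rcases h with ⟨h1, h2, h3⟩ | h | h
    · exact Or.inl ⟨h1.symm, h3, h2⟩
    · exact Or.inr (Or.inr h)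
    · exact Or.inr (Or.inl h)⟩
  loopless := ⟨fun x => by
    rintro (⟨h, -, -⟩ | ⟨rfl, -, -, h⟩ | ⟨rfl, -, -, h⟩)
    · exact G.irrefl h
    · exact h rfl
    · exact h rfl⟩

instance {V : Type*} [DecidableEq V] (G : SimpleGraph V) [DecidableRel G.Adj] (u v : V) :
    DecidableRel (G.compress u v).Adj := fun x y => by
  dsimp only [SimpleGraph.compress]; infer_instance

/-- The largest eigenvalue `λ₁(G)` of the (real) adjacency matrix of `G`. -/
noncomputable def SimpleGraph.lambdaOne {V : Type*} [Fintype V] [DecidableEq V]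
    (G : SimpleGraph V) [DecidableRel G.Adj] : ℝ :=
  sSup (spectrum ℝ (G.adjMatrix ℝ))

/-- The spectral irregularity `ε(G) = λ₁(G) − d̄(G)`, where `λ₁(G)` is the largest
eigenvalue of the adjacency matrix of `G` and `d̄(G)` is the average vertex degree. -/
noncomputable def SimpleGraph.spectralIrregularity {V : Type*} [Fintype V] [DecidableEq V]
    (G : SimpleGraph V) [DecidableRel G.Adj] : ℝ :=
  G.lambdaOne - (∑ w, (G.degree w : ℝ)) / (Fintype.card V : ℝ)

/-!
Let `x` be an eigenvector of `A(G)` for `λ₁(G)`. Since `A(G)` is entrywise nonnegative, `y = |x|`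
is a nonnegative vector whose Rayleigh quotient is at least `λ₁(G)`. Compression is a rank-two
update of the adjacency matrix, and
`y ⬝ A(G_{u→v}) y = y ⬝ A(G) y + 2 (y v - y u) ∑_{w ∈ N(u) \ N[v]} y w`,
which is at least `λ₁(G) ‖y‖²` when `y u ≤ y v`; otherwise swap the roles of `u` and `v`,
using that `G_{u→v}` and `G_{v→u}` are isomorphic. At `y = 1` the same identity shows that the
degree sum, hence the average degree, is unchanged.
-/

open Matrix Finset

section Spectral

variable {n : Type*} [Fintype n]

theorem Matrix.dotProduct_mulVec_le_abs {R : Type*} [CommRing R] [LinearOrder R]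
    [IsStrictOrderedRing R] {A : Matrix n n R} (hA : ∀ i j, 0 ≤ A i j) (x : n → R) :
    x ⬝ᵥ (A *ᵥ x) ≤ |x| ⬝ᵥ (A *ᵥ |x|) := by
  simp only [dotProduct, mulVec, Finset.mul_sum, Pi.abs_apply]
  refine sum_le_sum fun i _ => sum_le_sum fun j _ => ?_
  calc x i * (A i j * x j) ≤ |x i * (A i j * x j)| := le_abs_self _
    _ = |x i| * (A i j * |x j|) := by rw [abs_mul, abs_mul, abs_of_nonneg (hA i j)]

namespace Matrix.IsHermitian

variable [DecidableEq n] {A : Matrix n n ℝ}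

theorem dotProduct_mulVec_le_sSup_spectrum_mul (hA : A.IsHermitian) (z : n → ℝ) :
    z ⬝ᵥ (A *ᵥ z) ≤ sSup (spectrum ℝ A) * (z ⬝ᵥ z) := by
  have hpsd : (algebraMap ℝ (Matrix n n ℝ) (sSup (spectrum ℝ A)) - A).PosSemidef := by
    refine posSemidef_iff_isHermitian_and_spectrum_nonneg.mpr ⟨?_, ?_⟩
    · rw [algebraMap_eq_diagonal]
      exact (isHermitian_diagonal _).sub hA
    · rw [← spectrum.singleton_sub_eq]
      rintro _ ⟨_, rfl, x, hx, rfl⟩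
      exact sub_nonneg.mpr (le_csSup finite_real_spectrum.bddAbove hx)
  simpa only [star_trivial, Algebra.algebraMap_eq_smul_one, sub_mulVec, smul_mulVec, one_mulVec,
    dotProduct_sub, dotProduct_smul, smul_eq_mul, sub_nonneg] using hpsd.dotProduct_mulVec_nonneg z

theorem exists_mulVec_eq_sSup_spectrum_smul [Nonempty n] (hA : A.IsHermitian) :
    ∃ x : n → ℝ, x ≠ 0 ∧ A *ᵥ x = sSup (spectrum ℝ A) • x := by
  rw [hA.spectrum_real_eq_range_eigenvalues]
  obtain ⟨i, hi⟩ := (Set.range_nonempty _).csSup_mem (Set.finite_range hA.eigenvalues)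
  exact ⟨hA.eigenvectorBasis i, fun h => hA.eigenvectorBasis.orthonormal.ne_zero i
    (by ext j; exact congrFun h j), by rw [hA.mulVec_eigenvectorBasis, hi]⟩

theorem exists_nonneg_sSup_spectrum_mul_le [Nonempty n] (hA : A.IsHermitian)
    (hA₀ : ∀ i j, 0 ≤ A i j) :
    ∃ y : n → ℝ, 0 ≤ y ∧ 0 < y ⬝ᵥ y ∧ sSup (spectrum ℝ A) * (y ⬝ᵥ y) ≤ y ⬝ᵥ (A *ᵥ y) := by
  obtain ⟨x, hx, hAx⟩ := hA.exists_mulVec_eq_sSup_spectrum_smul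
  have habs : |x| ⬝ᵥ |x| = x ⬝ᵥ x := sum_congr rfl fun i _ => abs_mul_abs_self (x i)
  refine ⟨|x|, abs_nonneg x, habs ▸ by simpa using dotProduct_star_self_pos_iff.mpr hx, ?_⟩
  calc sSup (spectrum ℝ A) * (|x| ⬝ᵥ |x|) = x ⬝ᵥ (A *ᵥ x) := by
        rw [habs, hAx, dotProduct_smul, smul_eq_mul]
    _ ≤ |x| ⬝ᵥ (A *ᵥ |x|) := dotProduct_mulVec_le_abs hA₀ x

end Matrix.IsHermitian

end Spectral

namespace SimpleGraph

variable {V : Type*} [DecidableEq V] (G : SimpleGraph V)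

theorem compress_adj_swap (u v a b : V) :
    (G.compress u v).Adj (Equiv.swap u v a) (Equiv.swap u v b) ↔ (G.compress v u).Adj a b := by
  simp only [compress, Equiv.swap_apply_def]
  split_ifs <;> grind [G.adj_comm, G.irrefl]

variable [DecidableRel G.Adj]

theorem adjMatrix_compress_comm {R : Type*} [Zero R] [One R] (u v : V) :
    (G.compress v u).adjMatrix R =
      ((G.compress u v).adjMatrix R).submatrix (Equiv.swap u v) (Equiv.swap u v) := by
  ext a b
  simp only [adjMatrix_apply, submatrix_apply, compress_adj_swap]

variable [Fintype V]

def compressShifted (u v : V) : Finset V := {x | G.Adj u x ∧ ¬G.Adj v x ∧ x ≠ v}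

@[simp]
theorem mem_compressShifted {u v x : V} :
    x ∈ G.compressShifted u v ↔ G.Adj u x ∧ ¬G.Adj v x ∧ x ≠ v := by
  simp [compressShifted]

theorem compress_adj_iff {u v a b : V} :
    (G.compress u v).Adj a b ↔
      G.Adj a b ∧ ¬(a = u ∧ b ∈ G.compressShifted u v) ∧ ¬(b = u ∧ a ∈ G.compressShifted u v) ∨
        a = v ∧ b ∈ G.compressShifted u v ∨ b = v ∧ a ∈ G.compressShifted u v := by
  simp only [mem_compressShifted]
  rfl

variable {R : Type*} [CommRing R]

theorem adjMatrix_compress (u v : V) :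
    (G.compress u v).adjMatrix R = G.adjMatrix R
      + vecMulVec (Pi.single v 1 - Pi.single u 1)
          (fun x => if x ∈ G.compressShifted u v then 1 else 0)
      + vecMulVec (fun x => if x ∈ G.compressShifted u v then 1 else 0)
          (Pi.single v 1 - Pi.single u 1) := by
  ext a b
  simp only [adjMatrix_apply, Matrix.add_apply, vecMulVec_apply, Pi.sub_apply, Pi.single_apply,
    compress_adj_iff]
  split_ifs <;> grind [G.adj_comm, G.irrefl, mem_compressShifted]

theorem dotProduct_adjMatrix_compress_mulVec (u v : V) (w : V → R) :
    w ⬝ᵥ ((G.compress u v).adjMatrix R *ᵥ w) =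
      w ⬝ᵥ (G.adjMatrix R *ᵥ w) + 2 * (w v - w u) * ∑ x ∈ G.compressShifted u v, w x := by
  set s : V → R := fun x => if x ∈ G.compressShifted u v then 1 else 0
  have hs : w ⬝ᵥ s = ∑ x ∈ G.compressShifted u v, w x := by
    simp only [s, dotProduct, mul_ite, mul_one, mul_zero, sum_ite_mem, univ_inter]
  have hd : w ⬝ᵥ (Pi.single v 1 - Pi.single u 1) = w v - w u := by
    simp [dotProduct_sub, dotProduct_single]
  rw [adjMatrix_compress, add_mulVec, add_mulVec, dotProduct_add, dotProduct_add,
    vecMulVec_mulVec, vecMulVec_mulVec, op_smul_eq_smul, op_smul_eq_smul, dotProduct_smul,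
    dotProduct_smul, smul_eq_mul, smul_eq_mul, dotProduct_comm s, dotProduct_comm _ w, hs, hd]
  ring

theorem sum_degree_compress (u v : V) : ∑ x, (G.compress u v).degree x = ∑ x, G.degree x := by
  apply Nat.cast_injective (R := ℤ)
  simp only [← dart_card_eq_sum_degrees, natCast_card_dart_eq_dotProduct, dotProduct_comm _ 1,
    dotProduct_adjMatrix_compress_mulVec]
  simp

theorem lambdaOne_compress_comm (u v : V) :
    (G.compress v u).lambdaOne = (G.compress u v).lambdaOne := by
  have := AlgEquiv.spectrum_eq (reindexAlgEquiv ℝ ℝ (Equiv.swap u v))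
    ((G.compress u v).adjMatrix ℝ)
  rw [coe_reindexAlgEquiv, reindex_apply, Equiv.symm_swap, ← adjMatrix_compress_comm] at this
  rw [lambdaOne, lambdaOne, this]

theorem lambdaOne_le_lambdaOne_compress (u v : V) : G.lambdaOne ≤ (G.compress u v).lambdaOne := by
  have : Nonempty V := ⟨u⟩
  have hA₀ : ∀ i j, 0 ≤ G.adjMatrix ℝ i j := fun i j => by
    rw [adjMatrix_apply]
    split_ifs <;> norm_num
  obtain ⟨y, hy₀, hyy, hy⟩ := (G.isHermitian_adjMatrix ℝ).exists_nonneg_sSup_spectrum_mul_le hA₀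
  -- swapping `u` and `v` is an isomorphism `G.compress u v ≃g G.compress v u`
  wlog huv : y u ≤ y v generalizing u v
  · rw [← lambdaOne_compress_comm]
    exact this v u (le_of_not_ge huv)
  refine le_of_mul_le_mul_right ?_ hyy
  calc G.lambdaOne * (y ⬝ᵥ y) ≤ y ⬝ᵥ (G.adjMatrix ℝ *ᵥ y) := hy
    _ ≤ y ⬝ᵥ ((G.compress u v).adjMatrix ℝ *ᵥ y) := by
      rw [dotProduct_adjMatrix_compress_mulVec]
      have := sum_nonneg fun x (_ : x ∈ G.compressShifted u v) => hy₀ x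
      nlinarith
    _ ≤ (G.compress u v).lambdaOne * (y ⬝ᵥ y) :=
      ((G.compress u v).isHermitian_adjMatrix ℝ).dotProduct_mulVec_le_sSup_spectrum_mul y

end SimpleGraph

theorem compress_spectralIrregularity_ge_general {V : Type*} [Fintype V] [DecidableEq V]
    (G : SimpleGraph V) [DecidableRel G.Adj] (u v : V) :
    (G.compress u v).spectralIrregularity ≥ G.spectralIrregularity ∧
      (G.compress u v).lambdaOne ≥ G.lambdaOne := by
  have hle := G.lambdaOne_le_lambdaOne_compress u v
  refine ⟨?_, hle⟩
  have hdeg : ∑ x, ((G.compress u v).degree x : ℝ) = ∑ x, (G.degree x : ℝ) := by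
    exact_mod_cast G.sum_degree_compress u v
  rw [SimpleGraph.spectralIrregularity, SimpleGraph.spectralIrregularity, hdeg]
  exact sub_le_sub_right hle _

/-- Compression does not decrease spectral irregularity: if `G'` is the compression of
`G` from `u` to `v`, then `ε(G') ≥ ε(G)`; equivalently, the largest eigenvalue of the
adjacency matrix of `G'` is at least that of `G`. -/
theorem compress_spectralIrregularity_ge {V : Type*} [Fintype V] [DecidableEq V]
    (G : SimpleGraph V) [DecidableRel G.Adj] (u v : V) (huv : u ≠ v)
    (hn : 1 ≤ Fintype.card V) :
    (G.compress u v).spectralIrregularity ≥ G.spectralIrregularity ∧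
      (G.compress u v).lambdaOne ≥ G.lambdaOne :=
  compress_spectralIrregularity_ge_general G u v
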